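/- arXiv:1906.12326 — 2 statements merged into one kernel-verified Lean document; each statement's English description precedes it below -/
import Mathlib

section
/- If t_n = 2^{⌈na⌉} and s_n = 2^{⌈nb⌉} with b > a > 0, then Var(N_n)/E[N_n]² → 0 as n → ∞, where N_n is the number of occupied bins when s_n balls are thrown uniformly and independently into t_n bins. -/
open Filter

/-- Mean of the number of occupied bins: `E[N] = t(1 − (1 − 1/t)^s)`. -/
noncomputable def meanOccupied (t s : ℕ) : ℝ :=
  (t : ℝ) * (1 - (1 - 1 / (t : ℝ)) ^ s)

/-- Variance of the number of occupied bins: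
`Var(N) = t(1−1/t)^s + t²(1−1/t)(1−2/t)^s − t²(1−1/t)^{2s}`. -/
noncomputable def varOccupied (t s : ℕ) : ℝ :=
  (t : ℝ) * (1 - 1 / (t : ℝ)) ^ s
    + (t : ℝ) ^ 2 * (1 - 1 / (t : ℝ)) * (1 - 2 / (t : ℝ)) ^ s
    - (t : ℝ) ^ 2 * (1 - 1 / (t : ℝ)) ^ (2 * s)

lemma key_poly (T u X P : ℝ) (hT : 2 ≤ T) (hTu : T * u = 1) (hu0 : 0 < u)
    (hu1 : u ≤ 1 / 2) (hX0 : 0 ≤ X) (hX1 : X ≤ 1 / 2) (hP0 : 0 ≤ P) (hPX : P ≤ X ^ 2) :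
    |T * X + T ^ 2 * (1 - u) * P - T ^ 2 * X ^ 2| / (T * (1 - X)) ^ 2 ≤ 4 * X := by
  have hT0 : (0:ℝ) < T := by linarith
  have hM : T / 2 ≤ T * (1 - X) := by nlinarith
  have hM2 : T ^ 2 / 4 ≤ (T * (1 - X)) ^ 2 := by nlinarith
  have hMpos : (0:ℝ) < (T * (1 - X)) ^ 2 := by nlinarith
  have hVabs : |T * X + T ^ 2 * (1 - u) * P - T ^ 2 * X ^ 2| ≤ T ^ 2 * X := by
    rw [abs_le]
    constructor
    · nlinarith [mul_nonneg hT0.le hX0, mul_nonneg (mul_nonneg (sq_nonneg T) (by linarith : (0:ℝ) ≤ 1 - u)) hP0,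
        mul_nonneg (mul_nonneg (sq_nonneg T) hX0) (by linarith : (0:ℝ) ≤ 1 - X)]
    · nlinarith [mul_nonneg (mul_nonneg hT0.le hX0) (by linarith : (0:ℝ) ≤ T - 1),
        mul_nonneg (mul_nonneg (sq_nonneg T) hu0.le) hP0,
        mul_nonneg (sq_nonneg T) (by linarith : (0:ℝ) ≤ X ^ 2 - P)]
  rw [div_le_iff₀ hMpos]
  calc |T * X + T ^ 2 * (1 - u) * P - T ^ 2 * X ^ 2| ≤ T ^ 2 * X := hVabs
    _ ≤ 4 * X * (T * (1 - X)) ^ 2 := by nlinarith [mul_nonneg hX0 (by nlinarith : (0:ℝ) ≤ (T * (1 - X)) ^ 2 - T ^ 2 / 4)]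

lemma aux_ratio_bound (t s : ℕ) (ht : 2 ≤ (t : ℝ))
    (hx : (1 - 1 / (t : ℝ)) ^ s ≤ 1 / 2) :
    |varOccupied t s / (meanOccupied t s) ^ 2| ≤ 4 * (1 - 1 / (t : ℝ)) ^ s := by
  have hT0 : (0:ℝ) < (t:ℝ) := by linarith
  have hu0 : (0:ℝ) < 1 / (t:ℝ) := by positivity
  have hu1 : 1 / (t:ℝ) ≤ 1 / 2 := by
    apply one_div_le_one_div_of_le <;> linarith
  have h1 : (0:ℝ) ≤ 1 - 1 / (t:ℝ) := by linarith
  have h2 : (0:ℝ) ≤ 1 - 2 / (t:ℝ) := by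
    have : 2 / (t:ℝ) ≤ 2 / 2 := by
      apply div_le_div_of_nonneg_left <;> linarith
    norm_num at this; linarith
  have hX0 : (0:ℝ) ≤ (1 - 1 / (t:ℝ)) ^ s := pow_nonneg h1 s
  have hP0 : (0:ℝ) ≤ (1 - 2 / (t:ℝ)) ^ s := pow_nonneg h2 s
  have hPX : (1 - 2 / (t:ℝ)) ^ s ≤ ((1 - 1 / (t:ℝ)) ^ s) ^ 2 := by
    rw [← pow_mul, mul_comm s 2, pow_mul]
    apply pow_le_pow_left₀ h2 _ s
    have e : (1 - 1/(t:ℝ))^2 - (1 - 2/(t:ℝ)) = (1/(t:ℝ))^2 := by ring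
    nlinarith [sq_nonneg (1 / (t:ℝ)), e]
  have hV : varOccupied t s = (t:ℝ) * ((1 - 1 / (t:ℝ)) ^ s)
      + (t:ℝ) ^ 2 * (1 - 1 / (t:ℝ)) * ((1 - 2 / (t:ℝ)) ^ s)
      - (t:ℝ) ^ 2 * ((1 - 1 / (t:ℝ)) ^ s) ^ 2 := by
    unfold varOccupied
    rw [mul_comm 2 s, pow_mul]
  have hM : meanOccupied t s = (t:ℝ) * (1 - (1 - 1 / (t:ℝ)) ^ s) := rfl
  rw [hV, hM, abs_div, abs_of_nonneg (sq_nonneg ((t:ℝ) * (1 - (1 - 1 / (t:ℝ)) ^ s)))]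
  exact key_poly (t:ℝ) (1 / (t:ℝ)) ((1 - 1 / (t:ℝ)) ^ s) ((1 - 2 / (t:ℝ)) ^ s)
    ht (by field_simp) hu0 hu1 hX0 hx hP0 hPX

/-- If `t_n = 2^{⌈na⌉}` and `s_n = 2^{⌈nb⌉}` with `b > a > 0`, then the relative variance
`Var(N_n)/E[N_n]²` of the number of occupied bins tends to `0` as `n → ∞`. -/
theorem relative_variance_tendsto_zero (a b : ℝ) (ha : 0 < a) (hab : a < b) :
    Tendsto
      (fun n : ℕ =>
        varOccupied (2 ^ ⌈(n : ℝ) * a⌉₊) (2 ^ ⌈(n : ℝ) * b⌉₊)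
          / (meanOccupied (2 ^ ⌈(n : ℝ) * a⌉₊) (2 ^ ⌈(n : ℝ) * b⌉₊)) ^ 2)
      atTop (nhds 0) := by
  set T : ℕ → ℕ := fun n => 2 ^ ⌈(n : ℝ) * a⌉₊ with hTdef
  set S : ℕ → ℕ := fun n => 2 ^ ⌈(n : ℝ) * b⌉₊ with hSdef
  set x : ℕ → ℝ := fun n => (1 - 1 / (T n : ℝ)) ^ S n with hxdef
  -- ratio s/t tends to infinity
  have hAB : ∀ n : ℕ, ⌈(n : ℝ) * a⌉₊ ≤ ⌈(n : ℝ) * b⌉₊ := fun n =>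
    Nat.ceil_le_ceil (by
      apply mul_le_mul_of_nonneg_left hab.le (Nat.cast_nonneg n))
  have hTpos : ∀ n : ℕ, (0:ℝ) < (T n : ℝ) := fun n => by
    have : 0 < T n := Nat.pow_pos (by norm_num)
    exact_mod_cast this
  have hratio : Tendsto (fun n : ℕ => (S n : ℝ) / (T n : ℝ)) atTop atTop := by
    apply tendsto_atTop_mono (f := fun n : ℕ => (n : ℝ) * (b - a) - 1)
    · intro n
      have hA : ⌈(n : ℝ) * a⌉₊ ≤ ⌈(n : ℝ) * b⌉₊ := hAB n
      have key : (S n : ℝ) / (T n : ℝ) = (2:ℝ) ^ (⌈(n : ℝ) * b⌉₊ - ⌈(n : ℝ) * a⌉₊) := by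
        simp only [hSdef, hTdef]
        push_cast
        rw [pow_sub₀ (2:ℝ) (by norm_num) hA, div_eq_mul_inv]
      rw [key]
      have h1 : ((⌈(n : ℝ) * b⌉₊ - ⌈(n : ℝ) * a⌉₊ : ℕ) : ℝ)
          ≤ (2:ℝ) ^ (⌈(n : ℝ) * b⌉₊ - ⌈(n : ℝ) * a⌉₊) := by
        exact_mod_cast (Nat.lt_two_pow_self).le
      have h2 : (n : ℝ) * (b - a) - 1 ≤ ((⌈(n : ℝ) * b⌉₊ - ⌈(n : ℝ) * a⌉₊ : ℕ) : ℝ) := by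
        rw [Nat.cast_sub hA]
        have hb' : (n : ℝ) * b ≤ (⌈(n : ℝ) * b⌉₊ : ℝ) := Nat.le_ceil _
        have ha' : (⌈(n : ℝ) * a⌉₊ : ℝ) ≤ (n : ℝ) * a + 1 :=
          (Nat.ceil_lt_add_one (by positivity)).le
        nlinarith
      linarith
    · apply Tendsto.atTop_add _ tendsto_const_nhds
      exact Tendsto.atTop_mul_const (by linarith) tendsto_natCast_atTop_atTop
  -- x tends to 0
  have hxto : Tendsto x atTop (nhds 0) := by
    have hexp : Tendsto (fun n : ℕ => Real.exp (-((S n : ℝ) / (T n : ℝ)))) atTop (nhds 0) :=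
      Real.tendsto_exp_atBot.comp (tendsto_neg_atBot_iff.mpr hratio)
    apply squeeze_zero (fun n => pow_nonneg ?_ _) (fun n => ?_) hexp
    · have h1 : (1:ℝ) ≤ (T n : ℝ) := by
        have : 1 ≤ T n := Nat.one_le_two_pow
        exact_mod_cast this
      have : 1 / (T n : ℝ) ≤ 1 := by
        rw [div_le_one (hTpos n)]; exact h1
      linarith
    · have h1 : (1:ℝ) - 1 / (T n : ℝ) ≤ Real.exp (-(1 / (T n : ℝ))) := by
        have := Real.add_one_le_exp (-(1 / (T n : ℝ)))
        linarith
      have h0 : (0:ℝ) ≤ 1 - 1 / (T n : ℝ) := by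
        have h1' : (1:ℝ) ≤ (T n : ℝ) := by
          have : 1 ≤ T n := Nat.one_le_two_pow
          exact_mod_cast this
        have : 1 / (T n : ℝ) ≤ 1 := by rw [div_le_one (hTpos n)]; exact h1'
        linarith
      calc x n ≤ Real.exp (-(1 / (T n : ℝ))) ^ S n := pow_le_pow_left₀ h0 h1 _
        _ = Real.exp (-((S n : ℝ) / (T n : ℝ))) := by
            rw [← Real.exp_nat_mul]
            congr 1
            field_simp
  -- squeeze
  refine squeeze_zero_norm' (a := fun n => 4 * x n) ?_ ?_
  · have hev1 : ∀ᶠ n : ℕ in atTop, (2:ℝ) ≤ (T n : ℝ) := by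
      filter_upwards [eventually_ge_atTop 1] with n hn
      have : 1 ≤ ⌈(n : ℝ) * a⌉₊ := by
        rw [Nat.one_le_ceil_iff]
        positivity
      have h2 : 2 ^ 1 ≤ T n := Nat.pow_le_pow_right (by norm_num) this
      exact_mod_cast h2
    have hev2 : ∀ᶠ n : ℕ in atTop, x n ≤ 1 / 2 := by
      exact hxto.eventually (eventually_le_nhds (by norm_num : (0:ℝ) < 1/2))
    filter_upwards [hev1, hev2] with n h1 h2
    show |varOccupied (T n) (S n) / meanOccupied (T n) (S n) ^ 2| ≤ 4 * x n
    exact aux_ratio_bound (T n) (S n) h1 h2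
  · have h4 := hxto.const_mul (4:ℝ)
    rw [mul_zero] at h4
    exact h4
end

section
/- (Concentration of occupied bins) If t_n = 2^{⌈na⌉}, s_n = 2^{⌈nb⌉} with b > a > 0, and N_n is the number of occupied bins after throwing s_n balls uniformly and independently into t_n bins, then for every ε > 0, P(N_n / t_n < 1 − ε) → 0 as n → ∞. -/
/-!
Union bound instead of second moments: if at most `m` bins are occupied, all balls land in
some `m`-set of bins, so at most `choose t m * m ^ s ≤ 2 ^ t * m ^ s` of the `t ^ s` placements
qualify. With `m ≤ c t` for a fixed `c < 1` the probability is at most `2 ^ t * c ^ s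
= (2 * c ^ (s / t)) ^ t`, which tends to `0` because `s / t = 2 ^ (⌈nb⌉ - ⌈na⌉) → ∞`.
-/

open Finset Filter

/-- Number of bins receiving at least one ball. -/
def occupiedBins (s t : ℕ) (ω : Fin s → Fin t) : ℕ :=
  (Finset.univ.filter (fun b : Fin t => ∃ i, ω i = b)).card

open Topology

lemma occupiedBins_eq_card_image (s t : ℕ) (ω : Fin s → Fin t) :
    occupiedBins s t ω = #(univ.image ω) := by
  unfold occupiedBins
  congr 1
  ext b
  simp [eq_comm]

lemma card_filter_card_image_le {α β : Type*} [Fintype α] [DecidableEq α] [Fintype β]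
    [DecidableEq β] {m : ℕ} (hm : m ≤ Fintype.card β) :
    #{f : α → β | #(univ.image f) ≤ m} ≤ (Fintype.card β).choose m * m ^ Fintype.card α := by
  have hcover : ({f : α → β | #(univ.image f) ≤ m} : Finset _) ⊆
      (powersetCard m (univ : Finset β)).biUnion fun S => Fintype.piFinset fun _ => S := by
    intro f hf
    obtain ⟨S, himage, -, hS⟩ := exists_subsuperset_card_eq (subset_univ (univ.image f))
      (mem_filter.1 hf).2 (by simpa using hm)
    exact mem_biUnion.2 ⟨S, mem_powersetCard.2 ⟨subset_univ S, hS⟩,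
      Fintype.mem_piFinset.2 fun i => himage (mem_image_of_mem f (mem_univ i))⟩
  calc #{f : α → β | #(univ.image f) ≤ m}
      ≤ ∑ S ∈ powersetCard m (univ : Finset β), #(Fintype.piFinset fun _ : α => S) :=
        (card_le_card hcover).trans card_biUnion_le
    _ = (Fintype.card β).choose m * m ^ Fintype.card α := by
        rw [sum_congr rfl fun S hS => by
          rw [Fintype.card_piFinset, prod_const, (mem_powersetCard.1 hS).2, card_univ]]
        simp

lemma card_filter_occupiedBins_le_le (s t : ℕ) {m : ℕ} (hm : m ≤ t) :
    #{ω : Fin s → Fin t | occupiedBins s t ω ≤ m} ≤ 2 ^ t * m ^ s := by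
  simp only [occupiedBins_eq_card_image]
  calc _ ≤ t.choose m * m ^ s := by
        simpa using card_filter_card_image_le (α := Fin s) (β := Fin t) (m := m) (by simpa)
    _ ≤ 2 ^ t * m ^ s := Nat.mul_le_mul_right _ (Nat.choose_le_two_pow t m)

lemma card_filter_occupiedBins_div_lt_div_pow_le (s : ℕ) {t : ℕ} (ht : 0 < t) {r c : ℝ}
    (hrc : r ≤ c) (hc0 : 0 ≤ c) (hc1 : c ≤ 1) :
    (#{ω : Fin s → Fin t | (occupiedBins s t ω : ℝ) / t < r} : ℝ) / (t : ℝ) ^ s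
      ≤ 2 ^ t * c ^ s := by
  have ht' : (0 : ℝ) < t := by exact_mod_cast ht
  have hm : ⌊c * t⌋₊ ≤ t := Nat.floor_le_of_le (by nlinarith)
  have hsub : ({ω : Fin s → Fin t | (occupiedBins s t ω : ℝ) / t < r} : Finset _) ⊆
      ({ω : Fin s → Fin t | occupiedBins s t ω ≤ ⌊c * t⌋₊} : Finset _) := by
    intro ω hω
    rw [mem_filter, div_lt_iff₀ ht'] at hω
    exact mem_filter.2 ⟨mem_univ ω, Nat.le_floor (by nlinarith [hω.2])⟩
  have hcount : (#{ω : Fin s → Fin t | (occupiedBins s t ω : ℝ) / t < r} : ℝ)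
      ≤ 2 ^ t * (⌊c * t⌋₊ : ℝ) ^ s := by
    exact_mod_cast (card_le_card hsub).trans (card_filter_occupiedBins_le_le s t hm)
  rw [div_le_iff₀ (by positivity), mul_assoc, ← mul_pow]
  exact hcount.trans (by gcongr; exact Nat.floor_le (by positivity))

lemma tendsto_pow_of_tendsto_zero {ι : Type*} {l : Filter ι} {u : ι → ℝ} {k : ι → ℕ}
    (hu : Tendsto u l (𝓝 0)) (hk : Tendsto k l atTop) :
    Tendsto (fun i => u i ^ k i) l (𝓝 0) := by
  have hsmall : ∀ᶠ i in l, |u i| ≤ 1 / 2 :=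
    (hu.abs.eventually (ge_mem_nhds (by norm_num : |(0 : ℝ)| < 1 / 2)))
  have hhalf : Tendsto (fun i => ((1 : ℝ) / 2) ^ k i) l (𝓝 0) :=
    (tendsto_pow_atTop_nhds_zero_of_lt_one (by norm_num) (by norm_num)).comp hk
  refine squeeze_zero_norm' ?_ hhalf
  filter_upwards [hsmall] with i hi
  rw [norm_pow, Real.norm_eq_abs]
  exact pow_le_pow_left₀ (abs_nonneg _) hi _

lemma tendsto_ceil_mul_sub_ceil_mul {a b : ℝ} (ha : 0 ≤ a) (hab : a < b) :
    Tendsto (fun n : ℕ => ⌈n * b⌉₊ - ⌈n * a⌉₊) atTop atTop := by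
  refine tendsto_atTop.2 fun K => ?_
  filter_upwards [tendsto_atTop.1 (tendsto_natCast_atTop_atTop.atTop_mul_const (sub_pos.2 hab))
    ((K : ℝ) + 1)] with n hn
  have hceil_a : (⌈n * a⌉₊ : ℝ) < n * a + 1 := Nat.ceil_lt_add_one (by positivity)
  have hceil_b : (n : ℝ) * b ≤ ⌈n * b⌉₊ := Nat.le_ceil _
  have : ((K + ⌈n * a⌉₊ : ℕ) : ℝ) ≤ ⌈n * b⌉₊ := by push_cast; linarith
  exact_mod_cast Nat.le_sub_of_add_le (by exact_mod_cast this)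

lemma tendsto_two_pow_two_pow_mul_pow_two_pow {ι : Type*} {l : Filter ι} {c : ℝ} (hc0 : 0 ≤ c)
    (hc1 : c < 1) {A B : ι → ℕ} (hA : Tendsto A l atTop)
    (hBA : Tendsto (fun i => B i - A i) l atTop) :
    Tendsto (fun i => (2 : ℝ) ^ 2 ^ A i * c ^ 2 ^ B i) l (𝓝 0) := by
  have htwo_pow := tendsto_pow_atTop_atTop_of_one_lt (one_lt_two : 1 < (2 : ℕ))
  have hbase : Tendsto (fun i => 2 * c ^ 2 ^ (B i - A i)) l (𝓝 0) := by
    simpa using ((tendsto_pow_atTop_nhds_zero_of_lt_one hc0 hc1).comp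
      (htwo_pow.comp hBA)).const_mul 2
  refine (tendsto_pow_of_tendsto_zero hbase (htwo_pow.comp hA)).congr' ?_
  filter_upwards [hBA.eventually_gt_atTop 0] with i hi
  rw [Function.comp_apply, mul_pow, ← pow_mul, ← pow_add, Nat.sub_add_cancel (by omega)]

/-- Concentration of occupied bins: with `t_n = 2^{⌈na⌉}` bins and `s_n = 2^{⌈nb⌉}` balls,
`b > a > 0`, the fraction of occupied bins is below `1 − ε` with probability tending to `0`.
Probability is the fraction of the `t_n^{s_n}` equally likely placements. -/
theorem occupied_bins_concentration (a b : ℝ) (ha : 0 < a) (hab : a < b) (ε : ℝ) (hε : 0 < ε) :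
    Tendsto
      (fun n : ℕ =>
        (((Finset.univ.filter
            (fun ω : Fin (2 ^ ⌈(n : ℝ) * b⌉₊) → Fin (2 ^ ⌈(n : ℝ) * a⌉₊) =>
              (occupiedBins _ _ ω : ℝ) / (2 ^ ⌈(n : ℝ) * a⌉₊ : ℕ) < 1 - ε)).card : ℝ)
          / ((2 ^ ⌈(n : ℝ) * a⌉₊ : ℕ) : ℝ) ^ (2 ^ ⌈(n : ℝ) * b⌉₊ : ℕ)))
      atTop (nhds 0) := by
  have hc1 : max (1 - ε) 0 < 1 := max_lt (by linarith) one_pos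
  have hceil_a : Tendsto (fun n : ℕ => ⌈(n : ℝ) * a⌉₊) atTop atTop :=
    tendsto_nat_ceil_atTop.comp (tendsto_natCast_atTop_atTop.atTop_mul_const ha)
  refine squeeze_zero (fun n => by positivity) (fun n => ?_)
    (tendsto_two_pow_two_pow_mul_pow_two_pow (le_max_right _ 0) hc1 hceil_a
      (tendsto_ceil_mul_sub_ceil_mul ha.le hab))
  exact_mod_cast card_filter_occupiedBins_div_lt_div_pow_le _ (by positivity) (le_max_left _ 0)
    (le_max_right _ 0) hc1.le
end
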